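/- For every n ≥ 3, writing g(m) for the number of permutations π ∈ S_m such that π avoids both 213 and 312 and π² avoids the consecutive pattern 213, one has g(n) = g(n−1) + 2^{n−3} + 1. -/

import Mathlib

/-- `π` contains the (classical) pattern `σ`: there is a strictly increasing
sequence of positions on which `π` is order isomorphic to `σ`. -/
def ContainsPat {n k : ℕ} (π : Equiv.Perm (Fin n)) (σ : Equiv.Perm (Fin k)) : Prop :=
  ∃ f : Fin k → Fin n, StrictMono f ∧ ∀ a b : Fin k, σ a < σ b ↔ π (f a) < π (f b)

/-- `π` avoids the pattern `σ`. -/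
def AvoidsPat {n k : ℕ} (π : Equiv.Perm (Fin n)) (σ : Equiv.Perm (Fin k)) : Prop :=
  ¬ ContainsPat π σ

/-- `π` contains the consecutive pattern `σ`: some `k` consecutive positions of `π`
carry values order isomorphic to `σ`. -/
def ContainsConsecPat {n k : ℕ} (π : Equiv.Perm (Fin n)) (σ : Equiv.Perm (Fin k)) : Prop :=
  ∃ (i : ℕ) (h : i + k ≤ n), ∀ a b : Fin k,
    σ a < σ b ↔ π ⟨i + a.val, by have := a.isLt; omega⟩ < π ⟨i + b.val, by have := b.isLt; omega⟩

/-- `π` avoids the consecutive pattern `σ`. -/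
def AvoidsConsecPat {n k : ℕ} (π : Equiv.Perm (Fin n)) (σ : Equiv.Perm (Fin k)) : Prop :=
  ¬ ContainsConsecPat π σ

/-- the pattern 231 (0-indexed: 0 ↦ 1, 1 ↦ 2, 2 ↦ 0) -/
def p231 : Equiv.Perm (Fin 3) := c[0, 1, 2]

/-- the pattern 312 (0-indexed: 0 ↦ 2, 1 ↦ 0, 2 ↦ 1) -/
def p312 : Equiv.Perm (Fin 3) := c[0, 2, 1]

/-- the pattern 213 (0-indexed: 0 ↦ 1, 1 ↦ 0, 2 ↦ 2) -/
def p213 : Equiv.Perm (Fin 3) := c[0, 1]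

/-- the pattern 1432 (0-indexed: 0 ↦ 0, 1 ↦ 3, 2 ↦ 2, 3 ↦ 1) -/
def p1432 : Equiv.Perm (Fin 4) := c[1, 3]

/-- direct sum of two permutations -/
def dsum {k m : ℕ} (σ : Equiv.Perm (Fin k)) (τ : Equiv.Perm (Fin m)) :
    Equiv.Perm (Fin (k + m)) :=
  finSumFinEquiv.symm.trans ((Equiv.sumCongr σ τ).trans finSumFinEquiv)

/-- the Lucas numbers: L₁ = 1, L₂ = 3, L_m = L_{m-1} + L_{m-2} -/
def lucas : ℕ → ℕ
  | 0 => 2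
  | 1 => 1
  | n + 2 => lucas (n + 1) + lucas n

/-!
Avoiding 213 and 312 means that no entry has a larger entry on each side of it, i.e. `π` is
unimodal: increasing up to the position `k` of the maximum, decreasing afterwards. A unimodal
permutation of `Fin (n + 1)` is determined by the set of values after its peak, an arbitrary
subset of `Fin n`. If `π²` has a consecutive 213 at `i, i + 1, i + 2`, the value `π (i + 1)` can
be neither the smallest nor the middle one of `π i, π (i + 1), π (i + 2)`, so `i + 1 = k`;
inspecting this one window shows that `π²` contains a consecutive 213 exactly when at least two
values follow the peak and the second largest value `n - 1` precedes it. So `g (n + 1)` counts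
the subsets of `Fin n` that contain `n - 1` or have at most one element, and
`g (n + 1) = 2 ^ (n - 1) + n`.
-/

open Equiv Finset

lemma StrictMonoOn.eqOn_of_image_eq {α β : Type*} [LinearOrder α] [Preorder β] {s : Set α}
    [WellFoundedLT s] {f g : α → β} (hf : StrictMonoOn f s) (hg : StrictMonoOn g s)
    (h : f '' s = g '' s) : s.EqOn f g := by
  have := (hf.domRestrict.range_inj hg.domRestrict).1 (by simpa [Set.range_domRestrict] using h)
  exact fun x hx => congrFun this ⟨x, hx⟩

lemma StrictAntiOn.eqOn_of_image_eq {α β : Type*} [LinearOrder α] [Preorder β] {s : Set α}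
    [WellFoundedLT s] {f g : α → β} (hf : StrictAntiOn f s) (hg : StrictAntiOn g s)
    (h : f '' s = g '' s) : s.EqOn f g := fun x hx =>
  OrderDual.toDual.injective <| StrictMonoOn.eqOn_of_image_eq (f := OrderDual.toDual ∘ f)
    (g := OrderDual.toDual ∘ g) hf.dual_right hg.dual_right
    (by rw [Set.image_comp, Set.image_comp, h]) hx

section Counting

variable {α : Type*} [Fintype α] [DecidableEq α]

lemma card_finsets_mem (a : α) : #{T : Finset α | a ∈ T} = 2 ^ (Fintype.card α - 1) := by
  have hswap : #{T : Finset α | a ∈ T} = #{T : Finset α | a ∉ T} :=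
    card_bij' (fun T _ => T.erase a) (fun T _ => insert a T) (by simp) (by simp)
      (fun T hT => insert_erase (by simpa using hT)) (fun T hT => erase_insert (by simpa using hT))
  have htotal := card_filter_add_card_filter_not (s := (univ : Finset (Finset α))) (a ∈ ·)
  rw [card_univ, Fintype.card_finset, ← hswap] at htotal
  have : Nonempty α := ⟨a⟩
  obtain ⟨N, hN⟩ := Nat.exists_eq_succ_of_ne_zero (Fintype.card_ne_zero (α := α))
  rw [hN, pow_succ] at htotal
  rw [hN, Nat.succ_sub_one]
  omega

lemma card_finsets_not_mem_card_le_one (a : α) :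
    #{T : Finset α | a ∉ T ∧ #T ≤ 1} = Fintype.card α := by
  have : ({T : Finset α | a ∉ T ∧ #T ≤ 1} : Finset _) =
      insert ∅ ((univ.erase a).map ⟨singleton, singleton_injective⟩) := by
    ext T
    simp only [mem_filter, mem_univ, true_and, mem_insert, mem_map, mem_erase,
      Function.Embedding.coeFn_mk]
    constructor
    · rintro ⟨haT, hT⟩
      have : Nonempty α := ⟨a⟩
      obtain ⟨b, hb⟩ := card_le_one_iff_subset_singleton.1 hT
      rcases subset_singleton_iff.1 hb with rfl | rfl
      · exact Or.inl rfl
      · exact Or.inr ⟨b, ⟨by simpa [eq_comm] using haT, trivial⟩, rfl⟩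
    · rintro (rfl | ⟨b, ⟨hba, -⟩, rfl⟩)
      · simp
      · simp [Ne.symm hba]
  have hpos : 0 < Fintype.card α := Fintype.card_pos_iff.2 ⟨a⟩
  rw [this, card_insert_of_notMem (by simp [eq_comm]), card_map, card_erase_of_mem (mem_univ a),
    card_univ]
  omega

lemma card_finsets_mem_or_card_le_one (a : α) :
    #{T : Finset α | a ∈ T ∨ #T ≤ 1} = 2 ^ (Fintype.card α - 1) + Fintype.card α := by
  rw [← card_finsets_mem a, ← card_finsets_not_mem_card_le_one a, ← card_union_of_disjoint
    (disjoint_filter.2 fun T _ h h' => h'.1 h), ← filter_or]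
  congr 1
  ext T
  simp only [mem_filter, mem_univ, true_and]
  tauto

end Counting

namespace Equiv.Perm

variable {m : ℕ}

-- Positions and values become natural numbers, so that `i + 1`, `m - 2`, ... need no `Fin`
-- arithmetic.
def natExtend (π : Perm (Fin m)) : Perm ℕ :=
  π.extendDomain Fin.equivSubtype

lemma natExtend_apply_fin (π : Perm (Fin m)) (x : Fin m) : π.natExtend x = π x :=
  π.extendDomain_apply_image Fin.equivSubtype x

lemma natExtend_apply_of_lt (π : Perm (Fin m)) {i : ℕ} (h : i < m) :
    π.natExtend i = π ⟨i, h⟩ :=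
  π.natExtend_apply_fin ⟨i, h⟩

lemma natExtend_apply_of_le (π : Perm (Fin m)) {i : ℕ} (h : m ≤ i) : π.natExtend i = i :=
  π.extendDomain_apply_not_subtype Fin.equivSubtype (not_lt.2 h)

lemma natExtend_lt_iff (π : Perm (Fin m)) {i : ℕ} : π.natExtend i < m ↔ i < m := by
  by_cases h : i < m
  · simp [natExtend_apply_of_lt π h, h]
  · rw [natExtend_apply_of_le π (not_lt.1 h)]

lemma natExtend_mul (π τ : Perm (Fin m)) : (π * τ).natExtend = π.natExtend * τ.natExtend :=
  (extendDomain_mul _ _ _).symm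

lemma natExtend_inv (π : Perm (Fin m)) : π⁻¹.natExtend = π.natExtend⁻¹ := rfl

lemma natExtend_sq_apply (π : Perm (Fin m)) (i : ℕ) :
    (π ^ 2).natExtend i = π.natExtend (π.natExtend i) := by
  rw [sq, natExtend_mul, mul_apply]

lemma natExtend_symm_lt_iff (π : Perm (Fin m)) {i : ℕ} : π.natExtend⁻¹ i < m ↔ i < m := by
  rw [← natExtend_inv, natExtend_lt_iff]

end Equiv.Perm

open Equiv.Perm

variable {m : ℕ}

lemma p213_apply : ∀ a, p213 a = ![1, 0, 2] a := by decide

lemma p312_apply : ∀ a, p312 a = ![2, 0, 1] a := by decide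

lemma forall_p213_lt_iff {α : Type*} [LinearOrder α] (g : Fin 3 → α) :
    (∀ a b, p213 a < p213 b ↔ g a < g b) ↔ g 1 < g 0 ∧ g 0 < g 2 := by
  refine ⟨fun h => ⟨(h 1 0).1 (by decide), (h 0 2).1 (by decide)⟩,
    fun ⟨h₁, h₂⟩ a b => ?_⟩
  fin_cases a <;> fin_cases b <;> simp [p213_apply] <;> order

lemma forall_p312_lt_iff {α : Type*} [LinearOrder α] (g : Fin 3 → α) :
    (∀ a b, p312 a < p312 b ↔ g a < g b) ↔ g 1 < g 2 ∧ g 2 < g 0 := by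
  refine ⟨fun h => ⟨(h 1 2).1 (by decide), (h 2 0).1 (by decide)⟩,
    fun ⟨h₁, h₂⟩ a b => ?_⟩
  fin_cases a <;> fin_cases b <;> simp [p312_apply] <;> order

lemma containsPat_three_iff (π : Perm (Fin m)) (τ : Perm (Fin 3)) :
    ContainsPat π τ ↔ ∃ x y z, x < y ∧ y < z ∧ z < m ∧
      ∀ a b, τ a < τ b ↔ π.natExtend (![x, y, z] a) < π.natExtend (![x, y, z] b) := by
  constructor
  · rintro ⟨f, hf, hτ⟩
    refine ⟨f 0, f 1, f 2, hf (by decide), hf (by decide), (f 2).isLt, fun a b => ?_⟩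
    have hf' (a : Fin 3) : ![(f 0 : ℕ), f 1, f 2] a = f a := by fin_cases a <;> rfl
    rw [hf', hf', natExtend_apply_fin, natExtend_apply_fin]
    exact hτ a b
  · rintro ⟨x, y, z, hxy, hyz, hz, hτ⟩
    have hlt (a : Fin 3) : ![x, y, z] a < m := by fin_cases a <;> simp <;> omega
    refine ⟨fun a => ⟨![x, y, z] a, hlt a⟩, Fin.strictMono_iff_lt_succ.2 fun a => ?_,
      fun a b => ?_⟩
    · fin_cases a <;> simpa [Fin.lt_def]
    · rw [hτ, natExtend_apply_of_lt π (hlt a), natExtend_apply_of_lt π (hlt b)]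
      rfl

lemma containsPat_p213_iff (π : Perm (Fin m)) :
    ContainsPat π p213 ↔ ∃ x y z, x < y ∧ y < z ∧ z < m ∧
      π.natExtend y < π.natExtend x ∧ π.natExtend x < π.natExtend z := by
  simp [containsPat_three_iff, forall_p213_lt_iff]

lemma containsPat_p312_iff (π : Perm (Fin m)) :
    ContainsPat π p312 ↔ ∃ x y z, x < y ∧ y < z ∧ z < m ∧
      π.natExtend y < π.natExtend z ∧ π.natExtend z < π.natExtend x := by
  simp [containsPat_three_iff, forall_p312_lt_iff]

lemma containsConsecPat_p213_iff (π : Perm (Fin m)) :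
    ContainsConsecPat π p213 ↔ ∃ i, i + 2 < m ∧
      π.natExtend (i + 1) < π.natExtend i ∧ π.natExtend i < π.natExtend (i + 2) := by
  simp only [ContainsConsecPat, Fin.lt_def, ← natExtend_apply_of_lt]
  exact exists_congr fun i => exists_prop.trans <| and_congr (by omega)
    (by simpa using forall_p213_lt_iff fun a : Fin 3 => π.natExtend (i + a))

lemma avoidsPat_p213_and_p312_iff (π : Perm (Fin m)) :
    AvoidsPat π p213 ∧ AvoidsPat π p312 ↔ ∀ x y z, x < y → y < z → z < m →
      π.natExtend x < π.natExtend y ∨ π.natExtend z < π.natExtend y := by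
  simp only [AvoidsPat, containsPat_p213_iff, containsPat_p312_iff]
  constructor
  · rintro ⟨h213, h312⟩ x y z hxy hyz hz
    have hyx := π.natExtend.injective.ne hxy.ne'
    have hyz' := π.natExtend.injective.ne hyz.ne
    by_contra! hvalley
    rcases lt_or_gt_of_ne (π.natExtend.injective.ne (hxy.trans hyz).ne) with hxz | hxz
    · exact h213 ⟨x, y, z, hxy, hyz, hz, by omega, hxz⟩
    · exact h312 ⟨x, y, z, hxy, hyz, hz, by omega, hxz⟩
  · intro h
    constructor
    · rintro ⟨x, y, z, hxy, hyz, hz, h₁, h₂⟩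
      have := h x y z hxy hyz hz
      omega
    · rintro ⟨x, y, z, hxy, hyz, hz, h₁, h₂⟩
      have := h x y z hxy hyz hz
      omega

def IsUnimodalAt (π : Perm (Fin m)) (k : ℕ) : Prop :=
  k < m ∧ StrictMonoOn π.natExtend (Set.Iic k) ∧ StrictAntiOn π.natExtend (Set.Ico k m)

lemma exists_isUnimodalAt_iff {π : Perm (Fin m)} (hm : 0 < m) :
    (∃ k, IsUnimodalAt π k) ↔ ∀ x y z, x < y → y < z → z < m →
      π.natExtend x < π.natExtend y ∨ π.natExtend z < π.natExtend y := by
  set σ := π.natExtend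
  constructor
  · rintro ⟨k, -, hmono, hanti⟩ x y z hxy hyz hz
    rcases le_or_gt y k with hyk | hky
    · exact Or.inl (hmono (show x ≤ k by omega) hyk hxy)
    · exact Or.inr (hanti ⟨hky.le, by omega⟩ ⟨by omega, hz⟩ hyz)
  · intro hvalley
    have hσk : σ (σ⁻¹ (m - 1)) = m - 1 := σ.apply_symm_apply _
    have hkm : σ⁻¹ (m - 1) < m := (natExtend_symm_lt_iff π).2 (by omega)
    have hlt_peak : ∀ i < m, i ≠ σ⁻¹ (m - 1) → σ i < m - 1 := fun i hi hik => by
      have : σ i < m := (natExtend_lt_iff π).2 hi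
      have : σ i ≠ σ (σ⁻¹ (m - 1)) := σ.injective.ne hik
      omega
    refine ⟨σ⁻¹ (m - 1), hkm, fun i (hi : i ≤ _) j (hj : j ≤ _) hij => ?_,
      fun i hi j hj hij => ?_⟩
    · rcases hj.lt_or_eq with hj | rfl
      · have := hlt_peak j (by omega) hj.ne
        exact (hvalley i j _ hij hj hkm).resolve_right (by omega)
      · rw [hσk]; exact hlt_peak i (by omega) hij.ne
    · obtain ⟨hki, -⟩ := hi
      obtain ⟨-, hjm⟩ := hj
      rcases hki.lt_or_eq with hki | rfl
      · have := hlt_peak i (by omega) hki.ne'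
        exact (hvalley (σ⁻¹ (m - 1)) i j hki hij hjm).resolve_left (by omega)
      · rw [hσk]; exact hlt_peak j hjm hij.ne'

namespace IsUnimodalAt

variable {π : Perm (Fin m)} {k : ℕ}

lemma apply_lt_of_le_peak (h : IsUnimodalAt π k) {i j : ℕ} (hij : i < j) (hjk : j ≤ k) :
    π.natExtend i < π.natExtend j :=
  h.2.1 (show i ≤ k by omega) hjk hij

lemma apply_lt_of_peak_le (h : IsUnimodalAt π k) {i j : ℕ} (hki : k ≤ i) (hij : i < j)
    (hjm : j < m) : π.natExtend j < π.natExtend i :=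
  h.2.2 ⟨hki, by omega⟩ ⟨by omega, hjm⟩ hij

lemma apply_peak (h : IsUnimodalAt π k) : π.natExtend k = m - 1 := by
  set σ := π.natExtend
  set p := σ⁻¹ (m - 1)
  have hσp : σ p = m - 1 := σ.apply_symm_apply _
  have hp : p < m := (natExtend_symm_lt_iff π).2 (by have := h.1; omega)
  have hσk : σ k < m := (natExtend_lt_iff π).2 h.1
  rcases lt_trichotomy p k with hpk | rfl | hpk
  · have : σ p < σ k := h.apply_lt_of_le_peak hpk le_rfl
    omega
  · exact hσp
  · have : σ p < σ k := h.apply_lt_of_peak_le le_rfl hpk hp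
    omega

lemma peak_unique {k₁ k₂ : ℕ} (h₁ : IsUnimodalAt π k₁) (h₂ : IsUnimodalAt π k₂) :
    k₁ = k₂ :=
  π.natExtend.injective (h₁.apply_peak.trans h₂.apply_peak.symm)

lemma le_apply (h : IsUnimodalAt π k) {i : ℕ} (hi : i ≤ k) : i ≤ π.natExtend i :=
  h.2.1.Iic_id_le i hi

lemma apply_eq_self_of_le (h : IsUnimodalAt π k) {x y : ℕ} (hx : x ≤ k)
    (hfix : π.natExtend x = x) (hy : y ≤ x) : π.natExtend y = y := by
  have hdown : ∀ d ≤ x, π.natExtend (x - d) + d ≤ x := by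
    intro d
    induction d with
    | zero => simp [hfix]
    | succ d ih =>
      intro hd
      have := h.apply_lt_of_le_peak (show x - (d + 1) < x - d by omega) (by omega)
      have := ih (by omega)
      omega
  have := hdown (x - y) (by omega)
  have := h.le_apply (show y ≤ k by omega)
  rw [Nat.sub_sub_self hy] at *
  omega

lemma add_one_eq_peak_of_sq (h : IsUnimodalAt π k) {i : ℕ} (hi : i + 2 < m)
    (h₁ : π.natExtend (π.natExtend (i + 1)) < π.natExtend (π.natExtend i))
    (h₂ : π.natExtend (π.natExtend i) < π.natExtend (π.natExtend (i + 2))) : i + 1 = k := by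
  have hvalley := (exists_isUnimodalAt_iff (show 0 < m by omega)).1 ⟨k, h⟩
  set σ := π.natExtend
  have hx : σ i < m := (natExtend_lt_iff π).2 (by omega)
  have hy : σ (i + 1) < m := (natExtend_lt_iff π).2 (by omega)
  have hz : σ (i + 2) < m := (natExtend_lt_iff π).2 hi
  have hxy : σ i ≠ σ (i + 1) := σ.injective.ne (by omega)
  have hyz : σ (i + 1) ≠ σ (i + 2) := σ.injective.ne (by omega)
  have hxz : σ i ≠ σ (i + 2) := σ.injective.ne (by omega)
  -- `σ (i + 1)` is neither the middle value of the window (no valley of `σ` at position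
  -- `σ (i + 1)`) nor the smallest one (no valley at `i + 1`), so `i + 1` is a local maximum
  have hmid₁ : ¬ (σ i < σ (i + 1) ∧ σ (i + 1) < σ (i + 2)) := fun ⟨a, b⟩ => by
    have := hvalley _ _ _ a b hz
    omega
  have hmid₂ : ¬ (σ (i + 2) < σ (i + 1) ∧ σ (i + 1) < σ i) := fun ⟨a, b⟩ => by
    have := hvalley _ _ _ a b hx
    omega
  have hsides := hvalley i (i + 1) (i + 2) (by omega) (by omega) hi
  rcases lt_trichotomy (i + 1) k with hik | hik | hik
  · have : σ (i + 1) < σ (i + 2) := h.apply_lt_of_le_peak (by omega) hik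
    omega
  · exact hik
  · have : σ (i + 1) < σ i := h.apply_lt_of_peak_le (by omega) (by omega) (by omega)
    omega

lemma apply_pred_peak (h : IsUnimodalAt π k) (hp : π.natExtend⁻¹ (m - 2) < k) :
    π.natExtend (k - 1) = m - 2 := by
  set σ := π.natExtend
  have hσp : σ (σ⁻¹ (m - 2)) = m - 2 := σ.apply_symm_apply _
  have hpeak : σ k = m - 1 := h.apply_peak
  rcases (show σ⁻¹ (m - 2) ≤ k - 1 by omega).lt_or_eq with hlt | heq
  · have h₁ : σ (σ⁻¹ (m - 2)) < σ (k - 1) := h.apply_lt_of_le_peak hlt (by omega)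
    have h₂ : σ (k - 1) < σ k := h.apply_lt_of_le_peak (by omega) le_rfl
    omega
  · rw [← heq, hσp]

lemma apply_succ_peak (h : IsUnimodalAt π k) (hp : k < π.natExtend⁻¹ (m - 2)) :
    π.natExtend (k + 1) = m - 2 := by
  set σ := π.natExtend
  have hσp : σ (σ⁻¹ (m - 2)) = m - 2 := σ.apply_symm_apply _
  have hpm : σ⁻¹ (m - 2) < m := (natExtend_symm_lt_iff π).2 (by have := h.1; omega)
  have hpeak : σ k = m - 1 := h.apply_peak
  rcases (show k + 1 ≤ σ⁻¹ (m - 2) by omega).lt_or_eq with hlt | heq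
  · have h₁ : σ (σ⁻¹ (m - 2)) < σ (k + 1) := h.apply_lt_of_peak_le (by omega) hlt hpm
    have h₂ : σ (k + 1) < σ k := h.apply_lt_of_peak_le le_rfl (by omega) (by omega)
    omega
  · rw [heq, hσp]

lemma containsConsecPat_sq (h : IsUnimodalAt π k) (hk : k + 3 ≤ m)
    (hp : π.natExtend⁻¹ (m - 2) < k) : ContainsConsecPat (π ^ 2) p213 := by
  have hpred : π.natExtend (k - 1) = m - 2 := h.apply_pred_peak hp
  have hpeak : π.natExtend k = m - 1 := h.apply_peak
  rw [containsConsecPat_p213_iff]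
  refine ⟨k - 1, by omega, ?_⟩
  simp only [natExtend_sq_apply, show k - 1 + 1 = k by omega, show k - 1 + 2 = k + 1 by omega,
    hpred, hpeak]
  set σ := π.natExtend
  set B := σ (k + 1)
  have hB : B < m := (natExtend_lt_iff π).2 (by omega)
  have hBk : B ≠ σ k := σ.injective.ne (by omega)
  have hBk' : B ≠ σ (k - 1) := σ.injective.ne (by omega)
  have hσB : σ B ≠ σ (m - 2) := σ.injective.ne (by omega)
  refine ⟨h.apply_lt_of_peak_le (by omega) (by omega) (by omega), ?_⟩
  rcases le_or_gt k B with hkB | hBk''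
  · exact h.apply_lt_of_peak_le hkB (by omega) (by omega)
  · have : B ≤ σ B := h.le_apply hBk''.le
    have : σ (m - 2) ≤ B := by
      rcases (show k + 1 ≤ m - 2 by omega).lt_or_eq with hlt | heq
      · exact (h.apply_lt_of_peak_le (by omega) hlt (by omega)).le
      · rw [← heq]
    omega

lemma not_sq_window_of_lt_symm {i : ℕ} (h : IsUnimodalAt π (i + 1)) (hi : i + 2 < m)
    (hp : i + 1 < π.natExtend⁻¹ (m - 2)) :
    ¬ (π.natExtend (π.natExtend (i + 1)) < π.natExtend (π.natExtend i) ∧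
      π.natExtend (π.natExtend i) < π.natExtend (π.natExtend (i + 2))) := by
  have hpeak : π.natExtend (i + 1) = m - 1 := h.apply_peak
  have hsucc : π.natExtend (i + 2) = m - 2 := h.apply_succ_peak hp
  rintro ⟨h₁, h₂⟩
  rw [hsucc] at h₂
  rw [hpeak] at h₁
  set σ := π.natExtend
  have ha : σ i < m := (natExtend_lt_iff π).2 (by omega)
  have ha₁ : σ i ≠ σ (i + 1) := σ.injective.ne (by omega)
  have ha₂ : σ i ≠ σ (i + 2) := σ.injective.ne (by omega)
  rcases le_or_gt (i + 1) (σ i) with hia | hai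
  · have : σ (m - 2) < σ (σ i) := h.apply_lt_of_peak_le hia (by omega) (by omega)
    omega
  · -- `σ` fixes `i` and hence everything below, in particular the value `σ (m - 1) < i`
    have hfix : σ i = i := le_antisymm (by omega) (h.le_apply (by omega))
    rw [hfix] at h₁
    have hlast : σ (σ (m - 1)) = σ (m - 1) :=
      h.apply_eq_self_of_le (x := i) (by omega) hfix (by omega)
    have := σ.injective hlast
    omega

lemma containsConsecPat_sq_iff (h : IsUnimodalAt π k) :
    ContainsConsecPat (π ^ 2) p213 ↔ k + 3 ≤ m ∧ π.natExtend⁻¹ (m - 2) < k := by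
  refine ⟨fun hc => ?_, fun ⟨hk, hp⟩ => h.containsConsecPat_sq hk hp⟩
  obtain ⟨i, hi, h₁, h₂⟩ := (containsConsecPat_p213_iff _).1 hc
  simp only [natExtend_sq_apply] at h₁ h₂
  obtain rfl := h.add_one_eq_peak_of_sq hi h₁ h₂
  have hpeak : π.natExtend (i + 1) = m - 1 := h.apply_peak
  set σ := π.natExtend
  have hσp : σ (σ⁻¹ (m - 2)) = m - 2 := σ.apply_symm_apply _
  have hp : σ⁻¹ (m - 2) ≠ i + 1 := fun hp => by rw [hp] at hσp; omega
  rcases lt_or_gt_of_ne hp with hp | hp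
  · have hpred : σ i = m - 2 := h.apply_pred_peak hp
    refine ⟨?_, hp⟩
    by_contra hm
    have : σ (σ (i + 2)) < m := (natExtend_lt_iff π).2 ((natExtend_lt_iff π).2 hi)
    rw [hpred, show m - 2 = i + 1 by omega, hpeak] at h₂
    omega
  · exact absurd ⟨h₁, h₂⟩ (h.not_sq_window_of_lt_symm hi hp)

lemma eq_of_forall_lt_symm_iff {π₁ π₂ : Perm (Fin m)} {k : ℕ}
    (h₁ : IsUnimodalAt π₁ k) (h₂ : IsUnimodalAt π₂ k)
    (hT : ∀ v < m, k < π₁.natExtend⁻¹ v ↔ k < π₂.natExtend⁻¹ v) :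
    π₁ = π₂ := by
  have himage (π : Perm (Fin m)) (s : Set ℕ) :
      π.natExtend '' s = {v | π.natExtend⁻¹ v ∈ s} :=
    π.natExtend.image_eq_preimage_symm s
  have hleft : (Set.Iic k).EqOn π₁.natExtend π₂.natExtend := by
    refine StrictMonoOn.eqOn_of_image_eq h₁.2.1 h₂.2.1 ?_
    rw [himage, himage]
    ext v
    simp only [Set.mem_ofPred_eq, Set.mem_Iic, ← not_lt]
    by_cases hv : v < m
    · exact not_congr (hT v hv)
    · simp only [← natExtend_inv, natExtend_apply_of_le _ (not_lt.1 hv)]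
  have hright : (Set.Ioo k m).EqOn π₁.natExtend π₂.natExtend := by
    refine StrictAntiOn.eqOn_of_image_eq (h₁.2.2.mono Set.Ioo_subset_Ico_self)
      (h₂.2.2.mono Set.Ioo_subset_Ico_self) ?_
    rw [himage, himage]
    ext v
    simp only [Set.mem_ofPred_eq, Set.mem_Ioo, natExtend_symm_lt_iff]
    exact and_congr_left fun hv => hT v hv
  refine Equiv.ext fun x => Fin.ext ?_
  rw [← natExtend_apply_fin, ← natExtend_apply_fin]
  rcases le_or_gt x.val k with hx | hx
  exacts [hleft hx, hright ⟨hx, x.isLt⟩]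

end IsUnimodalAt

section Construction

variable {n : ℕ} (T : Finset (Fin n))

lemma card_compl_map_castSucc : #(T.map Fin.castSuccEmb)ᶜ = n - #T + 1 := by
  have := T.card_le_univ
  rw [Fintype.card_fin] at this
  rw [card_compl, card_map, Fintype.card_fin]
  omega

-- `T`, embedded in `Fin (n + 1)`, becomes the set of values after the peak `n - #T`.
noncomputable def unimodalFun (i : Fin (n + 1)) : Fin (n + 1) :=
  if h : i.val ≤ n - #T then
    (T.map Fin.castSuccEmb)ᶜ.orderEmbOfFin (card_compl_map_castSucc T) ⟨i, by omega⟩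
  else (T.map Fin.castSuccEmb).orderEmbOfFin (card_map _) ⟨n - i, by omega⟩

lemma unimodalFun_mem_iff (i : Fin (n + 1)) :
    unimodalFun T i ∈ T.map Fin.castSuccEmb ↔ n - #T < i := by
  unfold unimodalFun
  split_ifs with h
  · simp only [not_lt.2 h, iff_false]
    exact mem_compl.1 (orderEmbOfFin_mem _ _ _)
  · simp [not_le.1 h]

lemma unimodalFun_injective : Function.Injective (unimodalFun T) := by
  intro i j hij
  have hside := (unimodalFun_mem_iff T i).symm.trans (hij ▸ unimodalFun_mem_iff T j)
  unfold unimodalFun at hij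
  split_ifs at hij with hi hj hj
  · exact Fin.ext (by simpa using hij)
  · omega
  · omega
  · simp only [EmbeddingLike.apply_eq_iff_eq, Fin.mk.injEq] at hij
    exact Fin.ext (by omega)

noncomputable def unimodalPerm : Perm (Fin (n + 1)) :=
  Equiv.ofBijective (unimodalFun T) (Finite.injective_iff_bijective.1 (unimodalFun_injective T))

lemma unimodalPerm_natExtend_of_le {i : ℕ} (hi : i ≤ n) :
    (unimodalPerm T).natExtend i = unimodalFun T ⟨i, by omega⟩ :=
  natExtend_apply_of_lt _ (by omega)

lemma unimodalFun_peak : unimodalFun T ⟨n - #T, by omega⟩ = Fin.last n := by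
  have hlast : Fin.last n ∈ (T.map Fin.castSuccEmb)ᶜ := by
    simp [Fin.castSucc_ne_last]
  rw [unimodalFun, dif_pos le_rfl]
  refine le_antisymm (Fin.le_last _) ?_
  have := orderEmbOfFin_last (card_compl_map_castSucc T) (Nat.succ_pos _)
  simp only [Nat.add_sub_cancel] at this
  rw [this]
  exact le_max' _ _ hlast

lemma isUnimodalAt_unimodalPerm : IsUnimodalAt (unimodalPerm T) (n - #T) := by
  refine ⟨by omega, fun i (hi : i ≤ _) j (hj : j ≤ _) hij => ?_, fun i hi j hj hij => ?_⟩
  · rw [unimodalPerm_natExtend_of_le T (by omega), unimodalPerm_natExtend_of_le T (by omega)]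
    simp only [unimodalFun, dif_pos hi, dif_pos hj]
    exact Fin.lt_def.1 ((orderEmbOfFin _ _).strictMono (Fin.mk_lt_mk.2 hij))
  · obtain ⟨hki, -⟩ := hi
    obtain ⟨-, hjn⟩ := hj
    rw [unimodalPerm_natExtend_of_le T (by omega), unimodalPerm_natExtend_of_le T (by omega)]
    have hjT := (unimodalFun_mem_iff T ⟨j, hjn⟩).2 (by simp only; omega)
    rcases hki.lt_or_eq with hki | rfl
    · simp only [unimodalFun, dif_neg (show ¬ i ≤ n - #T by omega),
        dif_neg (show ¬ j ≤ n - #T by omega)]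
      exact Fin.lt_def.1
        ((orderEmbOfFin _ _).strictMono (Fin.mk_lt_mk.2 (show n - j < n - i by omega)))
    · rw [unimodalFun_peak]
      obtain ⟨v, -, hv⟩ := mem_map.1 hjT
      rw [← hv]
      exact Fin.castSucc_lt_last v

lemma mem_iff_lt_unimodalPerm_symm (v : Fin n) :
    v ∈ T ↔ n - #T < (unimodalPerm T).natExtend⁻¹ v := by
  have hsymm : (unimodalPerm T).natExtend⁻¹ v = ((unimodalPerm T)⁻¹ v.castSucc : ℕ) := by
    rw [← natExtend_inv, ← natExtend_apply_fin, Fin.val_castSucc]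
  rw [hsymm, ← unimodalFun_mem_iff, ← mem_map' Fin.castSuccEmb]
  change _ ↔ unimodalPerm T ((unimodalPerm T)⁻¹ v.castSucc) ∈ _
  rw [← Perm.mul_apply, mul_inv_cancel, Perm.one_apply, Fin.castSuccEmb_apply]

end Construction

namespace IsUnimodalAt

variable {n k : ℕ} {π : Perm (Fin (n + 1))}

lemma card_filter_lt_symm (h : IsUnimodalAt π k) :
    #{v : Fin n | k < π.natExtend⁻¹ v} = n - k := by
  have hpeak : π.natExtend k = n := h.apply_peak
  rw [← Nat.card_Ioc k n]
  refine card_bij (fun v _ => π.natExtend⁻¹ v) (fun v hv => ?_)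
    (fun v _ w _ hvw => Fin.ext (π.natExtend⁻¹.injective hvw)) (fun i hi => ?_)
  · have : π.natExtend⁻¹ v < n + 1 := (natExtend_symm_lt_iff π).2 (by omega)
    simp only [mem_filter, mem_univ, true_and] at hv
    exact mem_Ioc.2 ⟨hv, by omega⟩
  · obtain ⟨hki, hin⟩ := mem_Ioc.1 hi
    have : π.natExtend i < n + 1 := (natExtend_lt_iff π).2 (by omega)
    have : π.natExtend i ≠ π.natExtend k := π.natExtend.injective.ne (by omega)
    refine ⟨⟨π.natExtend i, by omega⟩, ?_, π.natExtend.symm_apply_apply i⟩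
    simpa using hki

lemma eq_unimodalPerm (h : IsUnimodalAt π k) :
    π = unimodalPerm {v : Fin n | k < π.natExtend⁻¹ v} := by
  set T : Finset (Fin n) := {v | k < π.natExtend⁻¹ v}
  have hk : n - #T = k := by
    have := h.1
    rw [h.card_filter_lt_symm]
    omega
  have hU := isUnimodalAt_unimodalPerm T
  rw [hk] at hU
  refine h.eq_of_forall_lt_symm_iff hU fun v hv => ?_
  rcases (show v < n ∨ v = n by omega) with hvn | hvn
  · have := mem_iff_lt_unimodalPerm_symm T ⟨v, hvn⟩
    simp only [T, mem_filter, mem_univ, true_and, hk] at this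
    exact this
  · have hpeak : π.natExtend k = n := h.apply_peak
    have hpeak' : (unimodalPerm T).natExtend k = n := hU.apply_peak
    rw [hvn, Perm.inv_eq_iff_eq.2 hpeak.symm, Perm.inv_eq_iff_eq.2 hpeak'.symm]

end IsUnimodalAt

noncomputable def unimodalEquiv (n : ℕ) :
    Finset (Fin n) ≃ {π : Perm (Fin (n + 1)) // ∃ k, IsUnimodalAt π k} :=
  Equiv.ofBijective (fun T => ⟨unimodalPerm T, _, isUnimodalAt_unimodalPerm T⟩) <| by
    refine ⟨fun T₁ T₂ heq => ?_,
      fun ⟨π, k, h⟩ => ⟨_, Subtype.ext h.eq_unimodalPerm.symm⟩⟩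
    have heq : unimodalPerm T₁ = unimodalPerm T₂ := congrArg Subtype.val heq
    have hk : n - #T₁ = n - #T₂ :=
      (isUnimodalAt_unimodalPerm T₁).peak_unique (heq ▸ isUnimodalAt_unimodalPerm T₂)
    ext v
    rw [mem_iff_lt_unimodalPerm_symm T₁, mem_iff_lt_unimodalPerm_symm T₂, heq, hk]

lemma avoidsConsecPat_unimodalPerm_sq_iff {a : ℕ} (T : Finset (Fin (a + 1))) :
    AvoidsConsecPat (unimodalPerm T ^ 2) p213 ↔ Fin.last a ∈ T ∨ #T ≤ 1 := by
  have hU := isUnimodalAt_unimodalPerm T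
  have hpeak : (unimodalPerm T).natExtend (a + 1 - #T) = a + 1 := hU.apply_peak
  have hsecond : (unimodalPerm T).natExtend⁻¹ a ≠ a + 1 - #T := fun h => by
    rw [Perm.inv_eq_iff_eq, hpeak] at h
    omega
  have hcard : #T ≤ a + 1 := by simpa using T.card_le_univ
  rw [AvoidsConsecPat, hU.containsConsecPat_sq_iff, mem_iff_lt_unimodalPerm_symm T,
    Fin.val_last, show a + 1 + 1 - 2 = a by omega]
  omega

theorem card_avoidsPat_p213_p312_avoidsConsecPat_sq (m : ℕ) (hm : 2 ≤ m) :
    Nat.card {π : Perm (Fin m) //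
        AvoidsPat π p213 ∧ AvoidsPat π p312 ∧ AvoidsConsecPat (π ^ 2) p213} =
      2 ^ (m - 2) + (m - 1) := by
  obtain ⟨a, rfl⟩ : ∃ a, m = a + 2 := ⟨m - 2, by omega⟩
  have hclass (π : Perm (Fin (a + 2))) :
      (AvoidsPat π p213 ∧ AvoidsPat π p312 ∧ AvoidsConsecPat (π ^ 2) p213) ↔
        (∃ k, IsUnimodalAt π k) ∧ AvoidsConsecPat (π ^ 2) p213 := by
    rw [← and_assoc, avoidsPat_p213_and_p312_iff, exists_isUnimodalAt_iff (by omega)]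
  let e : {T : Finset (Fin (a + 1)) // Fin.last a ∈ T ∨ #T ≤ 1} ≃
      {π : Perm (Fin (a + 2)) //
        AvoidsPat π p213 ∧ AvoidsPat π p312 ∧ AvoidsConsecPat (π ^ 2) p213} :=
    ((unimodalEquiv (a + 1)).subtypeEquiv
        fun T => (avoidsConsecPat_unimodalPerm_sq_iff T).symm).trans
      ((Equiv.subtypeSubtypeEquivSubtypeInter _ _).trans
        (Equiv.subtypeEquivRight fun π => (hclass π).symm))
  rw [← Nat.card_congr e, Nat.card_eq_fintype_card, Fintype.card_subtype,
    card_finsets_mem_or_card_le_one, Fintype.card_fin]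
  simp

/-- for n ≥ 3, g(n) = g(n−1) + 2^{n−3} + 1, where g(m) counts π ∈ S_m
avoiding 213 and 312 with π² avoiding the consecutive pattern 213. -/
theorem stmt13 (n : ℕ) (hn : 3 ≤ n) :
    Nat.card {π : Equiv.Perm (Fin n) //
        AvoidsPat π p213 ∧ AvoidsPat π p312 ∧ AvoidsConsecPat (π ^ 2) p213} =
      Nat.card {π : Equiv.Perm (Fin (n - 1)) //
        AvoidsPat π p213 ∧ AvoidsPat π p312 ∧ AvoidsConsecPat (π ^ 2) p213} +
      2 ^ (n - 3) + 1 := by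
  rw [card_avoidsPat_p213_p312_avoidsConsecPat_sq n (by omega),
    card_avoidsPat_p213_p312_avoidsConsecPat_sq (n - 1) (by omega)]
  obtain ⟨a, rfl⟩ : ∃ a, n = a + 3 := ⟨n - 3, by omega⟩
  rw [show a + 3 - 2 = a + 1 by omega, show a + 3 - 1 - 2 = a by omega,
    show a + 3 - 3 = a by omega, pow_succ]
  omega
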